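/- arXiv:0908.3781 — 5 statements merged into one kernel-verified Lean document; each statement's English description precedes it below -/
import Mathlib

section
/- Let I be a polynomial in the coefficients a_0, …, a_n which is homogeneous of degree g and isobaric of weight p, and suppose n·g = 2·p. Then for all α, δ in ℚ and every assignment a : Fin (n+1) → ℚ, evaluating I at the rescaled coefficients (fun i => α^(n−i) * δ^i * a i) equals α^p * δ^p times the evaluation of I at a; i.e., I is an invariant with respect to the diagonal transformations x = αx′, y = δy′. -/
open MvPolynomial

/-- The weight function assigning weight `i` to the coefficient variable `aᵢ`. -/
def wt (n : ℕ) : Fin (n + 1) → ℕ := fun i => (i : ℕ)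

/-- The lowering operator `D A = Σ_{i=0}^{n-1} (i+1) · aᵢ · ∂A/∂a_{i+1}`. -/
noncomputable def Dop (n : ℕ) (A : MvPolynomial (Fin (n + 1)) ℚ) :
    MvPolynomial (Fin (n + 1)) ℚ :=
  ∑ i : Fin n, C ((i : ℕ) + 1 : ℚ) * X i.castSucc * pderiv i.succ A

/-- The raising operator `Δ A = Σ_{i=0}^{n-1} (n-i) · a_{i+1} · ∂A/∂aᵢ`. -/
noncomputable def Δop (n : ℕ) (A : MvPolynomial (Fin (n + 1)) ℚ) :
    MvPolynomial (Fin (n + 1)) ℚ :=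
  ∑ i : Fin n, C ((n - (i : ℕ) : ℕ) : ℚ) * X i.succ * pderiv i.castSucc A

/-- Products over the support of a finsupp of powers can be extended to `univ`. -/
lemma prod_support_pow_eq_prod_univ {n : ℕ} (d : Fin (n + 1) →₀ ℕ) (f : Fin (n + 1) → ℚ) :
    ∏ i ∈ d.support, f i ^ d i = ∏ i : Fin (n + 1), f i ^ d i := by
  apply Finset.prod_subset (Finset.subset_univ _)
  intro i _ hi
  rw [Finsupp.notMem_support_iff.mp hi, pow_zero]

/-- If `I` is homogeneous of degree `g` and isobaric of weight `p` with
`n·g = 2·p`, then `I` is an invariant of the diagonal transformations: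
`I(αⁿ a₀, αⁿ⁻¹δ a₁, …, δⁿ aₙ) = αᵖ δᵖ I(a₀, …, aₙ)`. -/
theorem isobaric_homogeneous_is_invariant (n g p : ℕ)
    (I : MvPolynomial (Fin (n + 1)) ℚ)
    (hg : I.IsHomogeneous g) (hp : I.IsWeightedHomogeneous (wt n) p)
    (hng : n * g = 2 * p) :
    ∀ (α δ : ℚ) (a : Fin (n + 1) → ℚ),
      eval (fun i : Fin (n + 1) => α ^ (n - (i : ℕ)) * δ ^ (i : ℕ) * a i) I =
        α ^ p * δ ^ p * eval a I := by
  intro α δ a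
  rw [eval_eq, eval_eq, Finset.mul_sum]
  apply Finset.sum_congr rfl
  intro d hd
  have hc : coeff d I ≠ 0 := mem_support_iff.mp hd
  have h1 : ∑ i : Fin (n + 1), d i = g := by
    have h := hg hc
    rw [← h, Finsupp.weight_apply, Finsupp.sum_fintype]
    · simp
    · simp
  have h2 : ∑ i : Fin (n + 1), (i : ℕ) * d i = p := by
    have h := hp hc
    rw [← h, Finsupp.weight_apply, Finsupp.sum_fintype]
    · exact Finset.sum_congr rfl fun i _ => by simp [wt, mul_comm]
    · simp
  have h3 : ∑ i : Fin (n + 1), (n - (i : ℕ)) * d i = p := by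
    have key : (∑ i : Fin (n + 1), (n - (i : ℕ)) * d i) + ∑ i : Fin (n + 1), (i : ℕ) * d i
        = n * g := by
      rw [← Finset.sum_add_distrib, ← h1, Finset.mul_sum]
      apply Finset.sum_congr rfl
      intro i _
      have hi : (i : ℕ) ≤ n := Nat.lt_succ_iff.mp i.isLt
      rw [← Nat.add_mul, Nat.sub_add_cancel hi]
    omega
  rw [prod_support_pow_eq_prod_univ, prod_support_pow_eq_prod_univ]
  have expand : ∏ i : Fin (n + 1), (α ^ (n - (i : ℕ)) * δ ^ (i : ℕ) * a i) ^ d i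
      = (∏ i : Fin (n + 1), α ^ ((n - (i : ℕ)) * d i))
        * (∏ i : Fin (n + 1), δ ^ ((i : ℕ) * d i))
        * ∏ i : Fin (n + 1), a i ^ d i := by
    rw [← Finset.prod_mul_distrib, ← Finset.prod_mul_distrib]
    apply Finset.prod_congr rfl
    intro i _
    rw [mul_pow, mul_pow, pow_mul, pow_mul]
  rw [expand, Finset.prod_pow_eq_pow_sum, Finset.prod_pow_eq_pow_sum, h2, h3]
  ring
end

section
/- If A is a polynomial in the coefficients a_0, …, a_n that is homogeneous of degree g and isobaric of weight p, then D(Δ A) − Δ(D A) = ((n·g : ℚ) − 2·p) • A. -/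
open MvPolynomial

theorem Derivation.finset_sum_apply {ι R A M : Type*} [CommSemiring R] [CommSemiring A]
    [AddCommMonoid M] [Algebra R A] [Module A M] [Module R M] (s : Finset ι)
    (D : ι → Derivation R A M) (a : A) : (∑ i ∈ s, D i) a = ∑ i ∈ s, D i a := by
  rw [← Derivation.coeFnAddMonoidHom_apply, map_sum, Finset.sum_apply]; rfl

theorem Derivation.eq_sum_smul_X_smul_pderiv {σ R : Type*} [CommSemiring R] [Fintype σ]
    [DecidableEq σ] (D : Derivation R (MvPolynomial σ R) (MvPolynomial σ R)) (c : σ → R)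
    (h : ∀ k, D (X k) = c k • X k) :
    D = ∑ k, c k • ((X k : MvPolynomial σ R) • pderiv k) := by
  refine derivation_ext fun k => ?_
  simp [h, Derivation.finset_sum_apply, pderiv_X, Pi.single_apply]

noncomputable def DopDerivation (n : ℕ) :
    Derivation ℚ (MvPolynomial (Fin (n + 1)) ℚ) (MvPolynomial (Fin (n + 1)) ℚ) :=
  ∑ i : Fin n, (C ((i : ℕ) + 1 : ℚ) * X i.castSucc) • pderiv i.succ

noncomputable def ΔopDerivation (n : ℕ) :
    Derivation ℚ (MvPolynomial (Fin (n + 1)) ℚ) (MvPolynomial (Fin (n + 1)) ℚ) :=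
  ∑ i : Fin n, (C ((n - (i : ℕ) : ℕ) : ℚ) * X i.succ) • pderiv i.castSucc

section

variable {n : ℕ}

theorem DopDerivation_apply (A : MvPolynomial (Fin (n + 1)) ℚ) :
    DopDerivation n A = Dop n A := by
  simp [DopDerivation, Dop, Derivation.finset_sum_apply, mul_assoc]

theorem ΔopDerivation_apply (A : MvPolynomial (Fin (n + 1)) ℚ) :
    ΔopDerivation n A = Δop n A := by
  simp [ΔopDerivation, Δop, Derivation.finset_sum_apply, mul_assoc]

/- `k - 1` and `k + 1` wrap around in `Fin (n + 1)`; the coefficients vanish exactly at the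
wrapping points `k = 0` and `k = n`. -/
theorem DopDerivation_X (k : Fin (n + 1)) :
    DopDerivation n (X k) = (k : ℚ) • X (k - 1) := by
  rw [DopDerivation_apply]
  induction k using Fin.cases with
  | zero => simp [Dop, pderiv_X, Fin.succ_ne_zero]
  | succ j =>
    rw [Dop, Finset.sum_eq_single j]
    · rw [← Fin.coeSucc_eq_succ, add_sub_cancel_right, Fin.coeSucc_eq_succ]
      simp [pderiv_X, smul_eq_C_mul]
    · intro i _ hij
      simp [pderiv_X, hij]
    · simp

theorem ΔopDerivation_X (k : Fin (n + 1)) :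
    ΔopDerivation n (X k) = ((n : ℚ) - k) • X (k + 1) := by
  rw [ΔopDerivation_apply]
  induction k using Fin.lastCases with
  | last => simp [Δop, pderiv_X, Fin.castSucc_ne_last]
  | cast j =>
    rw [Δop, Finset.sum_eq_single j]
    · simp [pderiv_X, Fin.coeSucc_eq_succ, smul_eq_C_mul, Nat.cast_sub j.isLt.le]
    · intro i _ hij
      simp [pderiv_X, hij]
    · simp

theorem lie_DopDerivation_ΔopDerivation_X (k : Fin (n + 1)) :
    ⁅DopDerivation n, ΔopDerivation n⁆ (X k) = ((n : ℚ) - 2 * k) • X k := by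
  rw [Derivation.commutator_apply, ΔopDerivation_X, DopDerivation_X, Derivation.map_smul,
    Derivation.map_smul, DopDerivation_X, ΔopDerivation_X, add_sub_cancel_right, sub_add_cancel,
    smul_smul, smul_smul, ← sub_smul]
  congr 1
  have hup : ((n : ℚ) - k) * ((k + 1 : Fin (n + 1)) : ℕ) = ((n : ℚ) - k) * (k + 1) := by
    rcases eq_or_ne k (Fin.last n) with rfl | hk
    · simp
    · simp [Fin.val_add_one, hk]
  have hdown : (k : ℚ) * ((n : ℚ) - ((k - 1 : Fin (n + 1)) : ℕ)) = k * (n - (k - 1)) := by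
    rcases eq_or_ne k 0 with rfl | hk
    · simp
    · rw [Fin.val_sub_one_of_ne_zero hk, Nat.cast_pred (Fin.pos_iff_ne_zero.mpr hk)]
  rw [hup, hdown]
  ring

end

/-- If `A` is homogeneous of degree `g` and isobaric of weight `p`, then
`D(Δ A) − Δ(D A) = (n·g − 2·p) • A`. -/
theorem Dop_Δop_comm (n g p : ℕ) (A : MvPolynomial (Fin (n + 1)) ℚ)
    (hg : A.IsHomogeneous g) (hp : A.IsWeightedHomogeneous (wt n) p) :
    Dop n (Δop n A) - Δop n (Dop n A) = (((n * g : ℕ) : ℚ) - 2 * (p : ℚ)) • A := by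
  have hlie := (⁅DopDerivation n, ΔopDerivation n⁆).eq_sum_smul_X_smul_pderiv _
    lie_DopDerivation_ΔopDerivation_X
  calc Dop n (Δop n A) - Δop n (Dop n A) = ⁅DopDerivation n, ΔopDerivation n⁆ A := by
        simp only [Derivation.commutator_apply, DopDerivation_apply, ΔopDerivation_apply]
    _ = (n : ℚ) • ∑ k, X k * pderiv k A - (2 : ℚ) • ∑ k, wt n k • (X k * pderiv k A) := by
        simp [hlie, Derivation.finset_sum_apply, sub_smul, Finset.sum_sub_distrib, Finset.smul_sum,
          mul_smul, wt, Nat.cast_smul_eq_nsmul]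
    _ = (((n * g : ℕ) : ℚ) - 2 * (p : ℚ)) • A := by
        rw [hg.sum_X_mul_pderiv, hp.sum_weight_X_mul_pderiv, Nat.cast_mul, sub_smul, mul_smul,
          mul_smul]
        simp only [Nat.cast_smul_eq_nsmul]
end

section
/- If A is a polynomial in the coefficients a_0, …, a_n that is homogeneous of degree g and isobaric of weight p, then D(D(Δ A)) − Δ(D(D A)) = (2·((n·g : ℚ) − 2·p + 1)) • (D A). -/
open MvPolynomial

namespace MvPolynomial

variable {R σ : Type*} [CommSemiring R] {φ : MvPolynomial σ R} {w : σ → ℕ} {m : ℕ}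

lemma IsWeightedHomogeneous.pderiv_eq_zero_of_lt (h : φ.IsWeightedHomogeneous w m) {j : σ}
    (hj : m < w j) : pderiv j φ = 0 := by
  refine pderiv_eq_zero_of_notMem_vars fun hv => ?_
  obtain ⟨d, hd, hdj⟩ := (mem_vars_iff_mem_support j).mp hv
  have := Finsupp.le_weight_of_ne_zero' w (Finsupp.mem_support_iff.mp hdj)
  rw [h (mem_support_iff.mp hd)] at this
  omega

lemma IsWeightedHomogeneous.X_mul_pderiv (h : φ.IsWeightedHomogeneous w m) (j k : σ) :
    (X k * pderiv j φ).IsWeightedHomogeneous w (m + w k - w j) := by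
  by_cases hj : w j ≤ m
  · have := (isWeightedHomogeneous_X R w k).mul (h.pderiv (i := j) (n' := m - w j) (by omega))
    convert this using 1
    omega
  · rw [h.pderiv_eq_zero_of_lt (by omega), mul_zero]
    exact isWeightedHomogeneous_zero R w _

end MvPolynomial

lemma Derivation.sum_apply {R A M ι : Type*} [CommSemiring R] [CommSemiring A] [AddCommMonoid M]
    [Algebra R A] [Module A M] [Module R M] (s : Finset ι) (D : ι → Derivation R A M) (a : A) :
    (∑ i ∈ s, D i) a = ∑ i ∈ s, D i a := by
  rw [← Derivation.coeFnAddMonoidHom_apply, map_sum, Finset.sum_apply]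
  rfl

section Operators

variable {n : ℕ}

noncomputable def Dder (n : ℕ) :
    Derivation ℚ (MvPolynomial (Fin (n + 1)) ℚ) (MvPolynomial (Fin (n + 1)) ℚ) :=
  ∑ i : Fin n, (C ((i : ℕ) + 1 : ℚ) * X i.castSucc) • pderiv i.succ

noncomputable def Δder (n : ℕ) :
    Derivation ℚ (MvPolynomial (Fin (n + 1)) ℚ) (MvPolynomial (Fin (n + 1)) ℚ) :=
  ∑ i : Fin n, (C ((n - (i : ℕ) : ℕ) : ℚ) * X i.succ) • pderiv i.castSucc

noncomputable def Hder (n : ℕ) :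
    Derivation ℚ (MvPolynomial (Fin (n + 1)) ℚ) (MvPolynomial (Fin (n + 1)) ℚ) :=
  ∑ k : Fin (n + 1), (C ((n : ℚ) - 2 * (k : ℕ)) * X k) • pderiv k

lemma Dder_apply (A : MvPolynomial (Fin (n + 1)) ℚ) : Dder n A = Dop n A := by
  simp [Dder, Dop, Derivation.sum_apply]

lemma Δder_apply (A : MvPolynomial (Fin (n + 1)) ℚ) : Δder n A = Δop n A := by
  simp [Δder, Δop, Derivation.sum_apply]

lemma Hder_apply (A : MvPolynomial (Fin (n + 1)) ℚ) :
    Hder n A = ∑ k : Fin (n + 1), C ((n : ℚ) - 2 * (k : ℕ)) * X k * pderiv k A := by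
  simp [Hder, Derivation.sum_apply]

lemma Dder_X_succ (i : Fin n) : Dder n (X i.succ) = C ((i : ℕ) + 1 : ℚ) * X i.castSucc := by
  simp [Dder_apply, Dop, pderiv_X, Pi.single_apply]

lemma Dder_X_zero : Dder n (X 0) = 0 := by
  simp [Dder_apply, Dop, pderiv_X, Fin.succ_ne_zero]

lemma Δder_X_castSucc (i : Fin n) :
    Δder n (X i.castSucc) = C ((n - (i : ℕ) : ℕ) : ℚ) * X i.succ := by
  simp [Δder_apply, Δop, pderiv_X, Pi.single_apply]

lemma Δder_X_last : Δder n (X (Fin.last n)) = 0 := by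
  simp [Δder_apply, Δop, pderiv_X, Fin.castSucc_ne_last]

lemma Hder_X (k : Fin (n + 1)) : Hder n (X k) = C ((n : ℚ) - 2 * (k : ℕ)) * X k := by
  simp [Hder_apply, pderiv_X, Pi.single_apply]

lemma Dder_Δder_X (k : Fin (n + 1)) :
    Dder n (Δder n (X k)) = C (((k : ℕ) + 1 : ℚ) * (n - (k : ℕ))) * X k := by
  induction k using Fin.lastCases with
  | last => simp [Δder_X_last]
  | cast i =>
    rw [Δder_X_castSucc, ← smul_eq_C_mul, Derivation.map_smul, Dder_X_succ, smul_eq_C_mul,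
      ← mul_assoc, ← C_mul, Nat.cast_sub i.is_lt.le, Fin.val_castSucc, mul_comm ((n : ℚ) - _)]

lemma Δder_Dder_X (k : Fin (n + 1)) :
    Δder n (Dder n (X k)) = C (((k : ℕ) : ℚ) * (n - (k : ℕ) + 1)) * X k := by
  induction k using Fin.cases with
  | zero => simp [Dder_X_zero]
  | succ i =>
    rw [Dder_X_succ, ← smul_eq_C_mul, Derivation.map_smul, Δder_X_castSucc, smul_eq_C_mul,
      ← mul_assoc, ← C_mul, Nat.cast_sub i.is_lt.le, Fin.val_succ]
    congr 2
    push_cast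
    ring

lemma lie_Dder_Δder : ⁅Dder n, Δder n⁆ = Hder n :=
  derivation_ext fun k => by
    rw [Derivation.commutator_apply, Dder_Δder_X, Δder_Dder_X, Hder_X, ← sub_mul, ← map_sub]
    congr 2
    ring

lemma Dop_Δop_sub (A : MvPolynomial (Fin (n + 1)) ℚ) :
    Dop n (Δop n A) - Δop n (Dop n A) = Hder n A := by
  rw [← lie_Dder_Δder, Derivation.commutator_apply, Dder_apply, Δder_apply, Dder_apply, Δder_apply]

lemma Dop_sub (A B : MvPolynomial (Fin (n + 1)) ℚ) : Dop n (A - B) = Dop n A - Dop n B := by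
  simpa only [Dder_apply] using map_sub (Dder n) A B

lemma Dop_smul (c : ℚ) (A : MvPolynomial (Fin (n + 1)) ℚ) : Dop n (c • A) = c • Dop n A := by
  simpa only [Dder_apply] using (Dder n).map_smul c A

lemma Hder_eq_smul {g p : ℕ} {A : MvPolynomial (Fin (n + 1)) ℚ} (hg : A.IsHomogeneous g)
    (hp : A.IsWeightedHomogeneous (wt n) p) : Hder n A = ((n * g : ℚ) - 2 * p) • A :=
  calc Hder n A
      = (n : ℚ) • ∑ k, X k * pderiv k A - (2 : ℚ) • ∑ k, wt n k • (X k * pderiv k A) := by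
        simp only [Hder_apply, Finset.smul_sum, ← Finset.sum_sub_distrib,
          ← Nat.cast_smul_eq_nsmul ℚ, smul_eq_C_mul, wt]
        refine Finset.sum_congr rfl fun k _ => ?_
        simp only [map_sub, map_mul, map_natCast, map_ofNat]
        ring
    _ = ((n * g : ℚ) - 2 * p) • A := by
        rw [hg.sum_X_mul_pderiv, hp.sum_weight_X_mul_pderiv]
        simp only [← Nat.cast_smul_eq_nsmul ℚ]
        module

lemma isWeightedHomogeneous_Dop {w : Fin (n + 1) → ℕ} {m m' : ℕ}
    {A : MvPolynomial (Fin (n + 1)) ℚ} (h : A.IsWeightedHomogeneous w m)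
    (hw : ∀ i : Fin n, m + w i.castSucc - w i.succ = m') :
    (Dop n A).IsWeightedHomogeneous w m' := by
  rw [← mem_weightedHomogeneousSubmodule, Dop]
  refine Submodule.sum_mem _ fun i _ => ?_
  rw [mul_assoc, ← smul_eq_C_mul, ← hw i]
  exact Submodule.smul_mem _ _ (h.X_mul_pderiv i.succ i.castSucc)

lemma Dop_eq_zero_of_weight_zero {A : MvPolynomial (Fin (n + 1)) ℚ}
    (h : A.IsWeightedHomogeneous (wt n) 0) : Dop n A = 0 :=
  Finset.sum_eq_zero fun i _ => by
    rw [h.pderiv_eq_zero_of_lt (j := i.succ) (Nat.succ_pos i), mul_zero]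

lemma Hder_Dop_eq_smul {g p : ℕ} {A : MvPolynomial (Fin (n + 1)) ℚ} (hg : A.IsHomogeneous g)
    (hp : A.IsWeightedHomogeneous (wt n) p) :
    Hder n (Dop n A) = ((n * g : ℚ) - 2 * p + 2) • Dop n A := by
  obtain _ | p := p
  · rw [Dop_eq_zero_of_weight_zero hp, map_zero, smul_zero]
  · have hDg : (Dop n A).IsHomogeneous g := isWeightedHomogeneous_Dop hg fun _ => by simp
    have hDp : (Dop n A).IsWeightedHomogeneous (wt n) p :=
      isWeightedHomogeneous_Dop hp fun i => by simp only [wt, Fin.val_castSucc, Fin.val_succ]; omega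
    rw [Hder_eq_smul hDg hDp]
    congr 1
    push_cast
    ring

end Operators

/-- If `A` is homogeneous of degree `g` and isobaric of weight `p`, then
`D²Δ A − ΔD² A = 2·(n·g − 2·p + 1) • D A`. -/
theorem Dop_sq_Δop_comm (n g p : ℕ) (A : MvPolynomial (Fin (n + 1)) ℚ)
    (hg : A.IsHomogeneous g) (hp : A.IsWeightedHomogeneous (wt n) p) :
    Dop n (Dop n (Δop n A)) - Δop n (Dop n (Dop n A)) =
      (2 * (((n * g : ℕ) : ℚ) - 2 * (p : ℚ) + 1)) • Dop n A :=
  calc Dop n (Dop n (Δop n A)) - Δop n (Dop n (Dop n A))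
      = Dop n (Dop n (Δop n A) - Δop n (Dop n A))
          + (Dop n (Δop n (Dop n A)) - Δop n (Dop n (Dop n A))) := by
        rw [Dop_sub]; abel
    _ = Dop n (Hder n A) + Hder n (Dop n A) := by rw [Dop_Δop_sub, Dop_Δop_sub]
    _ = (2 * (((n * g : ℕ) : ℚ) - 2 * (p : ℚ) + 1)) • Dop n A := by
        rw [Hder_eq_smul hg hp, Dop_smul, Hder_Dop_eq_smul hg hp, ← add_smul]
        congr 1
        push_cast
        ring
end

section
/- Let A be a polynomial in the coefficients a_0, …, a_n that is homogeneous of degree g and isobaric of weight p, and let k ≥ 1. Then D(Δ^[k] A) − Δ^[k](D A) = (k·((n·g : ℚ) − 2·p − k + 1)) • (Δ^[k−1] A), where Δ^[k] denotes the k-fold iterate of Δ. -/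
open MvPolynomial

namespace BF

abbrev R (n : ℕ) := MvPolynomial (Fin (n + 1)) ℚ

variable {n : ℕ}

lemma der_sum_apply {ι : Type*} (s : Finset ι) (D : ι → Derivation ℚ (R n) (R n))
    (a : R n) : (∑ i ∈ s, D i) a = ∑ i ∈ s, D i a := by
  induction s using Finset.cons_induction with
  | empty => simp
  | cons i s hi ih => simp [Finset.sum_cons, Derivation.add_apply, ih]

noncomputable def Dder (n : ℕ) : Derivation ℚ (R n) (R n) :=
  ∑ i : Fin n, (C ((i : ℕ) + 1 : ℚ) * X i.castSucc) • pderiv i.succ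

noncomputable def Δder (n : ℕ) : Derivation ℚ (R n) (R n) :=
  ∑ i : Fin n, (C ((n - (i : ℕ) : ℕ) : ℚ) * X i.succ) • pderiv i.castSucc

lemma Dop_eq (A : R n) : Dop n A = Dder n A := by
  rw [Dder, der_sum_apply, Dop]
  simp [Derivation.smul_apply, smul_eq_mul]

lemma Δop_eq (A : R n) : Δop n A = Δder n A := by
  rw [Δder, der_sum_apply, Δop]
  simp [Derivation.smul_apply, smul_eq_mul]

lemma Dop_X_zero : Dop n (X 0) = 0 := by
  rw [Dop]
  apply Finset.sum_eq_zero
  intro i _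
  rw [pderiv_X_of_ne (Fin.succ_ne_zero i).symm, mul_zero]

lemma Dop_X_succ (m : Fin n) : Dop n (X m.succ) = C ((m : ℕ) + 1 : ℚ) * X m.castSucc := by
  rw [Dop, Finset.sum_eq_single m]
  · rw [pderiv_X_self, mul_one]
  · intro i _ hi
    rw [pderiv_X_of_ne (fun h => hi (Fin.succ_injective _ h).symm), mul_zero]
  · simp

lemma Δop_X_last : Δop n (X (Fin.last n)) = 0 := by
  rw [Δop]
  apply Finset.sum_eq_zero
  intro i _
  rw [pderiv_X_of_ne (Fin.ne_last_of_lt (Fin.castSucc_lt_last i)).symm, mul_zero]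

lemma Δop_X_castSucc (m : Fin n) :
    Δop n (X m.castSucc) = C ((n - (m : ℕ) : ℕ) : ℚ) * X m.succ := by
  rw [Δop, Finset.sum_eq_single m]
  · rw [pderiv_X_self, mul_one]
  · intro i _ hi
    rw [pderiv_X_of_ne (fun h => hi (Fin.castSucc_injective _ h).symm), mul_zero]
  · simp



lemma weight_eq_sum (w : Fin (n + 1) → ℕ) (d : Fin (n + 1) →₀ ℕ) :
    Finsupp.weight w d = ∑ j : Fin (n + 1), w j * d j := by
  rw [Finsupp.weight_apply, Finsupp.sum_fintype]
  · exact Finset.sum_congr rfl fun j _ => by rw [smul_eq_mul, mul_comm]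
  · intro i; simp

lemma X_mul_pderiv_monomial (j : Fin (n + 1)) (d : Fin (n + 1) →₀ ℕ) (c : ℚ) :
    X j * pderiv j (monomial d c) = ((d j : ℚ)) • monomial d c := by
  rw [pderiv_monomial]
  by_cases h : d j = 0
  · simp [h]
  · have hd : d - Finsupp.single j 1 + Finsupp.single j 1 = d := by
      ext i
      simp only [Finsupp.add_apply, Finsupp.tsub_apply, Finsupp.single_apply]
      rcases eq_or_ne j i with rfl | hji
      · simp; omega
      · simp [hji]
    rw [smul_monomial]
    rw [mul_comm, ← pow_one (X j : R n), ← monomial_add_single, hd, mul_comm c, smul_eq_mul]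

lemma euler (w : Fin (n + 1) → ℕ) {m : ℕ} {A : R n}
    (h : A.IsWeightedHomogeneous w m) :
    ∑ j : Fin (n + 1), ((w j : ℚ)) • (X j * pderiv j A) = (m : ℚ) • A := by
  conv_lhs => rw [A.as_sum]
  conv_rhs => rw [A.as_sum]
  simp only [map_sum, Finset.mul_sum, Finset.smul_sum]
  rw [Finset.sum_comm]
  apply Finset.sum_congr rfl
  intro d hd
  have hw : Finsupp.weight w d = m := h (mem_support_iff.mp hd)
  calc ∑ j : Fin (n + 1), (w j : ℚ) • (X j * pderiv j (monomial d (coeff d A)))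
      = ∑ j : Fin (n + 1), ((w j * d j : ℕ) : ℚ) • monomial d (coeff d A) := by
        apply Finset.sum_congr rfl
        intro j _
        rw [X_mul_pderiv_monomial, smul_smul]
        push_cast
        ring_nf
    _ = (m : ℚ) • monomial d (coeff d A) := by
        rw [← Finset.sum_smul, ← Nat.cast_sum, ← weight_eq_sum, hw]

lemma hom_X_mul_pderiv {w : Fin (n + 1) → ℕ} {m : ℕ} {A : R n}
    (h : A.IsWeightedHomogeneous w m) (i j : Fin (n + 1)) :
    (X j * pderiv i A).IsWeightedHomogeneous w (m + w j - w i) := by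
  conv => enter [2]; rw [A.as_sum]
  rw [map_sum, Finset.mul_sum]
  apply IsWeightedHomogeneous.sum
  intro d hd
  have hw : Finsupp.weight w d = m := h (mem_support_iff.mp hd)
  rw [pderiv_monomial]
  by_cases h0 : d i = 0
  · simp only [h0, Nat.cast_zero, mul_zero, map_zero, mul_zero]
    exact isWeightedHomogeneous_zero _ _ _
  · rw [mul_comm, ← pow_one (X j : R n), ← monomial_add_single]
    apply isWeightedHomogeneous_monomial
    have hsub : d = d - Finsupp.single i 1 + Finsupp.single i 1 := by
      ext l
      simp only [Finsupp.add_apply, Finsupp.tsub_apply, Finsupp.single_apply]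
      rcases eq_or_ne i l with rfl | hil
      · simp; omega
      · simp [hil]
    have hws : Finsupp.weight w (Finsupp.single i 1) = w i := by
      rw [Finsupp.weight_apply, Finsupp.sum_single_index] <;> simp
    have hwj : Finsupp.weight w (Finsupp.single j 1) = w j := by
      rw [Finsupp.weight_apply, Finsupp.sum_single_index] <;> simp
    have e1 : Finsupp.weight w (d - Finsupp.single i 1) + w i = m := by
      rw [← hws, ← map_add, ← hsub, hw]
    rw [map_add, hwj]
    omega

lemma Dop_C_mul (c : ℚ) (A : R n) : Dop n (C c * A) = C c * Dop n (A) := by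
  rw [← smul_eq_C_mul, ← smul_eq_C_mul, Dop_eq, Dop_eq, Derivation.map_smul]

lemma Δop_C_mul (c : ℚ) (A : R n) : Δop n (C c * A) = C c * Δop n (A) := by
  rw [← smul_eq_C_mul, ← smul_eq_C_mul, Δop_eq, Δop_eq, Derivation.map_smul]

lemma Dop_Δop_X (j : Fin (n + 1)) :
    Dop n (Δop n (X j)) = (((n - (j : ℕ) : ℕ) * ((j : ℕ) + 1) : ℚ)) • X j := by
  induction j using Fin.lastCases with
  | last =>
    rw [Δop_X_last, Dop_eq, map_zero]
    simp
  | cast m =>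
    rw [Δop_X_castSucc, Dop_C_mul, Dop_X_succ, ← mul_assoc, ← C_mul, ← smul_eq_C_mul]
    simp [Fin.coe_castSucc]

lemma Δop_Dop_X (j : Fin (n + 1)) :
    Δop n (Dop n (X j)) = (((j : ℕ) : ℚ) * (((n - ((j : ℕ) - 1) : ℕ)) : ℚ)) • X j := by
  induction j using Fin.cases with
  | zero =>
    rw [Dop_X_zero, Δop_eq, map_zero]
    simp
  | succ m =>
    rw [Dop_X_succ, Δop_C_mul, Δop_X_castSucc, ← mul_assoc, ← C_mul, ← smul_eq_C_mul]
    have hc : (((m : ℕ) + 1 : ℚ) * ((n - (m : ℕ) : ℕ) : ℚ))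
        = ((m.succ : ℕ) : ℚ) * ((n - ((m.succ : ℕ) - 1) : ℕ) : ℚ) := by
      rw [Fin.val_succ, Nat.add_sub_cancel]
      push_cast
      ring
    rw [hc]

noncomputable def Eder (n : ℕ) : Derivation ℚ (R n) (R n) :=
  ∑ j : Fin (n + 1), ((((n : ℚ) - 2 * ((j : ℕ) : ℚ)) • (X j : R n)) • pderiv j)

lemma Eder_apply (A : R n) :
    Eder n A = ∑ j : Fin (n + 1), ((n : ℚ) - 2 * ((j : ℕ) : ℚ)) • (X j * pderiv j A) := by
  rw [Eder, der_sum_apply]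
  apply Finset.sum_congr rfl
  intro j _
  rw [Derivation.smul_apply, smul_assoc, smul_eq_mul]

lemma bracket_eq : ⁅Dder n, Δder n⁆ = Eder n := by
  apply derivation_ext
  intro j
  rw [Derivation.commutator_apply, ← Δop_eq, ← Dop_eq (Δop n (X j)), ← Dop_eq,
    ← Δop_eq (Dop n (X j)), Dop_Δop_X, Δop_Dop_X, Eder_apply, Finset.sum_eq_single j]
  · rw [pderiv_X_self, mul_one, ← sub_smul]
    have hj : (j : ℕ) ≤ n := Fin.is_le j
    have hc : ((((n - (j : ℕ) : ℕ) * ((j : ℕ) + 1) : ℚ))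
          - ((j : ℕ) : ℚ) * (((n - ((j : ℕ) - 1) : ℕ)) : ℚ))
        = (n : ℚ) - 2 * ((j : ℕ) : ℚ) := by
      rcases Nat.eq_zero_or_pos (j : ℕ) with h0 | h1
      · simp [h0]
      · rw [Nat.cast_sub hj, Nat.cast_sub (by omega : (j : ℕ) - 1 ≤ n), Nat.cast_sub h1]
        push_cast
        ring
    exact congrArg (fun c : ℚ => c • (X j : R n)) hc
  · intro i _ hij
    rw [pderiv_X_of_ne hij.symm, mul_zero, smul_zero]
  · exact fun h => absurd (Finset.mem_univ j) h

lemma comm_single {g p : ℕ} {A : R n} (hg : A.IsHomogeneous g)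
    (hp : A.IsWeightedHomogeneous (wt n) p) :
    Dop n (Δop n A) - Δop n (Dop n A) = (((n : ℚ) * (g : ℚ) - 2 * (p : ℚ))) • A := by
  rw [Dop_eq (Δop n A), Δop_eq A, Δop_eq (Dop n A), Dop_eq A, ← Derivation.commutator_apply,
    bracket_eq, Eder_apply]
  have h1 : ∑ j : Fin (n + 1), (((1 : Fin (n + 1) → ℕ) j : ℚ)) • (X j * pderiv j A)
      = (g : ℚ) • A := euler _ hg
  have h2 : ∑ j : Fin (n + 1), ((wt n j : ℚ)) • (X j * pderiv j A)
      = (p : ℚ) • A := euler _ hp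
  simp only [Pi.one_apply, Nat.cast_one, one_smul] at h1
  calc ∑ j : Fin (n + 1), ((n : ℚ) - 2 * ((j : ℕ) : ℚ)) • (X j * pderiv j A)
      = (n : ℚ) • (∑ j : Fin (n + 1), (X j * pderiv j A))
        - (2 : ℚ) • (∑ j : Fin (n + 1), ((wt n j : ℚ)) • (X j * pderiv j A)) := by
        rw [Finset.smul_sum, Finset.smul_sum, ← Finset.sum_sub_distrib]
        apply Finset.sum_congr rfl
        intro j _
        simp only [wt]
        rw [smul_smul, ← sub_smul]
    _ = (((n : ℚ) * (g : ℚ) - 2 * (p : ℚ))) • A := by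
        rw [h1, h2, smul_smul, smul_smul, ← sub_smul]

lemma Δop_isHomogeneous {g : ℕ} {A : R n} (h : A.IsHomogeneous g) :
    (Δop n A).IsHomogeneous g := by
  rw [Δop]
  apply IsWeightedHomogeneous.sum
  intro i _
  rw [mul_assoc]
  have := (isWeightedHomogeneous_C (1 : Fin (n + 1) → ℕ)
    ((n - (i : ℕ) : ℕ) : ℚ)).mul (hom_X_mul_pderiv h i.castSucc i.succ)
  simpa using this

lemma Δop_isWeighted {p : ℕ} {A : R n} (h : A.IsWeightedHomogeneous (wt n) p) :
    (Δop n A).IsWeightedHomogeneous (wt n) (p + 1) := by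
  rw [Δop]
  apply IsWeightedHomogeneous.sum
  intro i _
  rw [mul_assoc]
  have := (isWeightedHomogeneous_C (wt n)
    ((n - (i : ℕ) : ℕ) : ℚ)).mul (hom_X_mul_pderiv h i.castSucc i.succ)
  have he : (0 : ℕ) + (p + wt n i.succ - wt n i.castSucc) = p + 1 := by
    simp only [wt, Fin.val_succ, Fin.coe_castSucc, Nat.zero_add]
    omega
  rwa [he] at this


lemma iter_isHomogeneous {g : ℕ} {A : R n} (h : A.IsHomogeneous g) (k : ℕ) :
    ((Δop n)^[k] A).IsHomogeneous g := by
  induction k with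
  | zero => exact h
  | succ k ih => rw [Function.iterate_succ_apply']; exact Δop_isHomogeneous ih

lemma iter_isWeighted {p : ℕ} {A : R n} (h : A.IsWeightedHomogeneous (wt n) p) (k : ℕ) :
    ((Δop n)^[k] A).IsWeightedHomogeneous (wt n) (p + k) := by
  induction k with
  | zero => exact h
  | succ k ih =>
    rw [Function.iterate_succ_apply']
    exact Δop_isWeighted ih

lemma Δop_sub_smul (B C' : R n) (c : ℚ) :
    Δop n (B - c • C') = Δop n B - c • Δop n C' := by
  rw [Δop_eq, Δop_eq, Δop_eq, (Δder n).map_sub, Derivation.map_smul]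

end BF

open BF in
/-- If `A` is homogeneous of degree `g` and isobaric of weight `p`, and `k ≥ 1`,
then `D(Δᵏ A) − Δᵏ(D A) = k·(n·g − 2·p − k + 1) • Δᵏ⁻¹ A`. -/
theorem Dop_Δop_iterate_comm (n g p k : ℕ) (hk : 1 ≤ k)
    (A : MvPolynomial (Fin (n + 1)) ℚ)
    (hg : A.IsHomogeneous g) (hp : A.IsWeightedHomogeneous (wt n) p) :
    Dop n ((Δop n)^[k] A) - (Δop n)^[k] (Dop n A) =
      ((k : ℚ) * (((n * g : ℕ) : ℚ) - 2 * (p : ℚ) - (k : ℚ) + 1)) •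
        (Δop n)^[k - 1] A := by
  obtain ⟨m, rfl⟩ : ∃ m, k = m + 1 := ⟨k - 1, by omega⟩
  simp only [Nat.add_sub_cancel]
  clear hk
  induction m with
  | zero =>
    simp only [zero_add, Function.iterate_one, Function.iterate_zero, id_eq, Nat.cast_one]
    rw [comm_single hg hp]
    have hc : ((1 : ℚ) * (((n * g : ℕ) : ℚ) - 2 * (p : ℚ) - 1 + 1))
        = (n : ℚ) * (g : ℚ) - 2 * (p : ℚ) := by
      push_cast
      ring
    rw [hc]
  | succ m ih =>
    set B := (Δop n)^[m + 1] A with hB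
    have hBg : B.IsHomogeneous g := iter_isHomogeneous hg (m + 1)
    have hBp : B.IsWeightedHomogeneous (wt n) (p + (m + 1)) := iter_isWeighted hp (m + 1)
    have key := comm_single hBg hBp
    have hΔ : (Δop n)^[m + 1] (Dop n A)
        = Dop n B - (((m + 1 : ℕ) : ℚ) *
            (((n * g : ℕ) : ℚ) - 2 * (p : ℚ) - ((m + 1 : ℕ) : ℚ) + 1)) • (Δop n)^[m] A := by
      rw [← ih]
      abel
    rw [Function.iterate_succ_apply' (Δop n) (m + 1) A,
      Function.iterate_succ_apply' (Δop n) (m + 1) (Dop n A), hΔ, Δop_sub_smul, ← hB]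
    have hΔB : Δop n ((Δop n)^[m] A) = B := by
      rw [hB, ← Function.iterate_succ_apply' (Δop n) m A]
    rw [hΔB]
    push_cast at key ⊢
    linear_combination (norm := module) key
end

section
/- Let A be a polynomial in the coefficients a_0, …, a_n that is homogeneous of degree g. Then there exists a natural number k such that the k-fold iterate Δ^[k] A is the zero polynomial; that is, repeated application of Δ eventually annihilates any homogeneous polynomial. -/
open MvPolynomial

private lemma mem_support_pderiv'' {σ : Type*} [DecidableEq σ] (i : σ) (A : MvPolynomial σ ℚ)
    (d : σ →₀ ℕ) (hd : d ∈ (pderiv i A).support) :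
    ∃ s ∈ A.support, s i ≠ 0 ∧ d = s - Finsupp.single i 1 := by
  have : pderiv i A = ∑ s ∈ A.support, monomial (s - Finsupp.single i 1) (A.coeff s * s i) := by
    conv_lhs => rw [← A.support_sum_monomial_coeff]
    rw [map_sum]
    simp [pderiv_monomial]
  rw [this] at hd
  have := MvPolynomial.support_sum hd
  rw [Finset.mem_biUnion] at this
  obtain ⟨s, hs, hmem⟩ := this
  refine ⟨s, hs, ?_, ?_⟩
  · intro h0; simp [h0] at hmem
  · have := MvPolynomial.support_monomial_subset hmem
    simpa using this

private lemma mem_support_Δop'' (n : ℕ) (A : MvPolynomial (Fin (n + 1)) ℚ)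
    (d : Fin (n + 1) →₀ ℕ) (hd : d ∈ (Δop n A).support) :
    ∃ e ∈ A.support, ∃ i : Fin n,
      d + Finsupp.single i.castSucc 1 = e + Finsupp.single i.succ 1 := by
  have h1 := MvPolynomial.support_sum hd
  rw [Finset.mem_biUnion] at h1
  obtain ⟨i, -, hi⟩ := h1
  have h2 := MvPolynomial.support_mul _ _ hi
  rw [Finset.mem_add] at h2
  obtain ⟨u, hu, v, hv, rfl⟩ := h2
  have hu' : u = Finsupp.single i.succ 1 := by
    rw [MvPolynomial.C_mul_X_eq_monomial] at hu
    simpa using MvPolynomial.support_monomial_subset hu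
  obtain ⟨s, hs, hsi, rfl⟩ := mem_support_pderiv'' i.castSucc A v hv
  refine ⟨s, hs, i, ?_⟩
  have hle : Finsupp.single i.castSucc 1 ≤ s := by
    rw [Finsupp.single_le_iff]; omega
  subst hu'
  rw [add_assoc, tsub_add_cancel_of_le hle]; exact add_comm _ _

/-- total degree of an exponent vector -/
private def degf (n : ℕ) (d : Fin (n + 1) →₀ ℕ) : ℕ := ∑ j : Fin (n + 1), d j
/-- weight of an exponent vector -/
private def wf (n : ℕ) (d : Fin (n + 1) →₀ ℕ) : ℕ := ∑ j : Fin (n + 1), (j : ℕ) * d j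

private lemma degf_add (n : ℕ) (d e : Fin (n + 1) →₀ ℕ) :
    degf n (d + e) = degf n d + degf n e := by
  simp [degf, Finset.sum_add_distrib]

private lemma wf_add (n : ℕ) (d e : Fin (n + 1) →₀ ℕ) :
    wf n (d + e) = wf n d + wf n e := by
  simp [wf, Nat.mul_add, Finset.sum_add_distrib]

private lemma degf_single (n : ℕ) (a : Fin (n + 1)) : degf n (Finsupp.single a 1) = 1 := by
  simp [degf, Finsupp.single_apply]

private lemma wf_single (n : ℕ) (a : Fin (n + 1)) :
    wf n (Finsupp.single a 1) = (a : ℕ) := by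
  simp [wf, Finsupp.single_apply, Finset.sum_ite_eq']

private lemma key_invariant (n : ℕ) (A : MvPolynomial (Fin (n + 1)) ℚ) (k : ℕ) :
    ∀ d ∈ ((Δop n)^[k] A).support, k ≤ wf n d ∧ degf n d ≤ A.totalDegree := by
  induction k with
  | zero =>
    intro d hd
    refine ⟨Nat.zero_le _, ?_⟩
    have := MvPolynomial.le_totalDegree hd
    refine le_trans (le_of_eq ?_) this
    rw [Finsupp.sum_fintype]
    · rfl
    · intro; rfl
  | succ k ih =>
    intro d hd
    rw [Function.iterate_succ_apply'] at hd
    obtain ⟨e, he, i, heq⟩ := mem_support_Δop'' n _ d hd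
    obtain ⟨hw, hdeg⟩ := ih e he
    have h1 : wf n d + (i : ℕ) = wf n e + ((i : ℕ) + 1) := by
      have := congrArg (wf n) heq
      rwa [wf_add, wf_add, wf_single, wf_single, Fin.coe_castSucc, Fin.val_succ] at this
    have h2 : degf n d = degf n e := by
      have := congrArg (degf n) heq
      rw [degf_add, degf_add, degf_single, degf_single] at this
      omega
    constructor <;> omega

/-- Repeated application of `Δ` eventually annihilates any homogeneous
polynomial: if `A` is homogeneous of degree `g`, there is a `k` with
`Δᵏ A = 0`. -/
theorem Δop_iterate_eventually_zero (n g : ℕ)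
    (A : MvPolynomial (Fin (n + 1)) ℚ) (hg : A.IsHomogeneous g) :
    ∃ k : ℕ, (Δop n)^[k] A = 0 := by
  refine ⟨n * A.totalDegree + 1, ?_⟩
  rw [← MvPolynomial.support_eq_empty, Finset.eq_empty_iff_forall_notMem]
  intro d hd
  obtain ⟨hw, hdeg⟩ := key_invariant n A _ d hd
  have hwle : wf n d ≤ n * degf n d := by
    calc wf n d ≤ ∑ j : Fin (n + 1), n * d j :=
      Finset.sum_le_sum fun j _ => Nat.mul_le_mul_right _ (Nat.le_of_lt_succ j.isLt)
    _ = n * degf n d := by rw [degf, Finset.mul_sum]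
  have : n * degf n d ≤ n * A.totalDegree := Nat.mul_le_mul_left _ hdeg
  omega
end
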